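/- arXiv:2105.06415 — 2 statements merged into one kernel-verified Lean document; each statement's English description precedes it below -/
import Mathlib

section
/- Let α, β, a₂, a₀, c₀ be real numbers with β ≠ 0 and a₂ ≠ 0. Then the cubic polynomial V(ζ) = (β/6)ζ³ + (a₂/(2β))ζ² + (β(a₀ + c₀β)/a₂)ζ + c₀ satisfies α V''''(ζ) + V'(ζ) V''(ζ) − β V(ζ) = (β²/3)ζ³ + a₂ζ² + (a₂²/β²)ζ + a₀ for all ζ ∈ ℝ. This gives a one-parameter (c₀) family of cubic solutions of the reduced travelling-wave ODE with cubic forcing having leading coefficient a₃ = β²/3 and a₁ = a₂²/β². -/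
private lemma cubic_deriv (a b c d : ℝ) :
    deriv (fun z : ℝ => a * z ^ 3 + b * z ^ 2 + c * z + d)
      = fun z => 3 * a * z ^ 2 + 2 * b * z + c := by
  funext z
  have h : HasDerivAt (fun z : ℝ => a * z ^ 3 + b * z ^ 2 + c * z + d)
      (3 * a * z ^ 2 + 2 * b * z + c) z := by
    have := ((((hasDerivAt_pow 3 z).const_mul a).add
      ((hasDerivAt_pow 2 z).const_mul b)).add
      ((hasDerivAt_id z).const_mul c)).add_const d
    convert this using 1
    · rfl
    · rfl
    · rfl
    · simp
      ring
  exact h.deriv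

/-- One-parameter (`c₀`) family of cubic solutions of the reduced travelling-wave ODE:
`V(ζ) = (β/6)ζ³ + (a₂/(2β))ζ² + (β(a₀ + c₀β)/a₂)ζ + c₀` satisfies
`α V'''' + V' V'' − β V = (β²/3)ζ³ + a₂ζ² + (a₂²/β²)ζ + a₀`. -/
theorem cubic_family_one
    (α β a₂ a₀ c₀ : ℝ) (hβ : β ≠ 0) (ha₂ : a₂ ≠ 0) :
    ∀ ζ : ℝ,
      α * iteratedDeriv 4
          (fun z => β / 6 * z ^ 3 + a₂ / (2 * β) * z ^ 2 + β * (a₀ + c₀ * β) / a₂ * z + c₀) ζ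
        + deriv (fun z => β / 6 * z ^ 3 + a₂ / (2 * β) * z ^ 2 + β * (a₀ + c₀ * β) / a₂ * z + c₀) ζ
          * iteratedDeriv 2
            (fun z => β / 6 * z ^ 3 + a₂ / (2 * β) * z ^ 2 + β * (a₀ + c₀ * β) / a₂ * z + c₀) ζ
        - β * (β / 6 * ζ ^ 3 + a₂ / (2 * β) * ζ ^ 2 + β * (a₀ + c₀ * β) / a₂ * ζ + c₀)
      = β ^ 2 / 3 * ζ ^ 3 + a₂ * ζ ^ 2 + a₂ ^ 2 / β ^ 2 * ζ + a₀ := by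
  intro ζ
  have h1 := cubic_deriv (β / 6) (a₂ / (2 * β)) (β * (a₀ + c₀ * β) / a₂) c₀
  have h2 : deriv (fun z : ℝ => 3 * (β / 6) * z ^ 2 + 2 * (a₂ / (2 * β)) * z
      + β * (a₀ + c₀ * β) / a₂) = fun z => 2 * (3 * (β / 6)) * z + 2 * (a₂ / (2 * β)) := by
    have := cubic_deriv 0 (3 * (β / 6)) (2 * (a₂ / (2 * β))) (β * (a₀ + c₀ * β) / a₂)
    simp only [zero_mul, zero_add, mul_zero] at this ⊢
    rw [← this]
  have h3 : deriv (fun z : ℝ => 2 * (3 * (β / 6)) * z + 2 * (a₂ / (2 * β)))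
      = fun _ => 2 * (3 * (β / 6)) := by
    have := cubic_deriv 0 0 (2 * (3 * (β / 6))) (2 * (a₂ / (2 * β)))
    simp only [zero_mul, zero_add, mul_zero] at this ⊢
    rw [← this]
  have h4 : deriv (fun _ : ℝ => 2 * (3 * (β / 6))) = fun _ : ℝ => (0 : ℝ) := by
    funext z; simp
  simp only [show (4 : ℕ) = 3 + 1 from rfl, show (3 : ℕ) = 2 + 1 from rfl,
    iteratedDeriv_succ, iteratedDeriv_one, iteratedDeriv_zero] at *
  rw [h1, h2, h3, h4]
  field_simp
  ring
end

section
/- Let α, β be nonzero real constants and c₀ > 0 a real constant. Let c : ℝ → ℝ be smooth with antiderivative C, write χ = x − C(t), and define the forcing h(x,t) = h₁(χ) − β c(t) χ + h₀(t) with h₁(ζ) = −12α c₀(8α c₀⁴ + β) tanh(c₀ζ) + 96α² c₀⁵ tanh³(c₀ζ) and h₀ : ℝ → ℝ smooth. Then u(x,t) = c(t) + 12α c₀² sech²(c₀(x − C(t))) is an exact solution of the forced Ostrovsky equation ∂x(u_t + u u_x + α u_xxx) = β u + ∂x h. This is a generalized solitary (sech-squared) wave riding on the time-dependent background c(t), stationary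 in a reference frame moving with speed c(t). -/
/-- Partial derivative with respect to the first (space) variable. -/
noncomputable def px (u : ℝ → ℝ → ℝ) : ℝ → ℝ → ℝ := fun x t => deriv (fun y => u y t) x

/-- Partial derivative with respect to the second (time) variable. -/
noncomputable def pt (u : ℝ → ℝ → ℝ) : ℝ → ℝ → ℝ := fun x t => deriv (fun s => u x s) t

/-- Smoothness of a function of two real variables. -/
def Smooth2 (u : ℝ → ℝ → ℝ) : Prop := ContDiff ℝ (⊤ : ℕ∞) (fun p : ℝ × ℝ => u p.1 p.2)

/-- `u` solves the forced Ostrovsky equation `∂x(u_t + u u_x + α u_xxx) = β u + ∂x h`. -/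
def SolvesForcedOstrovsky (α β : ℝ) (h u : ℝ → ℝ → ℝ) : Prop :=
  ∀ x t : ℝ,
    px (fun x t => pt u x t + u x t * px u x t + α * px (px (px u)) x t) x t
      = β * u x t + px h x t

lemma tanh_hasDerivAt (x : ℝ) : HasDerivAt Real.tanh (1 - Real.tanh x ^ 2) x := by
  have hc : Real.cosh x ≠ 0 := (Real.cosh_pos x).ne'
  have hd := (Real.hasDerivAt_sinh x).div (Real.hasDerivAt_cosh x) hc
  have hf : (Real.sinh / Real.cosh) = Real.tanh := by
    funext y; rw [Real.tanh_eq_sinh_div_cosh]; rfl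
  rw [hf] at hd
  refine hd.congr_deriv ?_
  rw [Real.tanh_eq_sinh_div_cosh]
  have h3 := Real.cosh_sq_sub_sinh_sq x
  field_simp

lemma sech_sq_eq (y : ℝ) : (1 / Real.cosh y) ^ 2 = 1 - Real.tanh y ^ 2 := by
  have hc : Real.cosh y ≠ 0 := (Real.cosh_pos y).ne'
  have h3 := Real.cosh_sq_sub_sinh_sq y
  rw [Real.tanh_eq_sinh_div_cosh]
  field_simp
  linarith [h3]

lemma tanh_shift_hasDerivAt (c₀ b x : ℝ) :
    HasDerivAt (fun y => Real.tanh (c₀ * (y - b)))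
      (c₀ * (1 - Real.tanh (c₀ * (x - b)) ^ 2)) x := by
  have h1 : HasDerivAt (fun y : ℝ => c₀ * (y - b)) c₀ x := by
    simpa using ((hasDerivAt_id x).sub_const b).const_mul c₀
  have := (tanh_hasDerivAt (c₀ * (x - b))).comp x h1
  exact this.congr_deriv (by ring)

/-- The travelling solitary profile written with `tanh`. -/
noncomputable def solW (α c₀ : ℝ) (c C : ℝ → ℝ) : ℝ → ℝ → ℝ :=
  fun x t => c t + 12 * α * c₀ ^ 2 * (1 - Real.tanh (c₀ * (x - C t)) ^ 2)

lemma solW_px (α c₀ : ℝ) (c C : ℝ → ℝ) (x t : ℝ) :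
    px (solW α c₀ c C) x t =
      -24 * α * c₀ ^ 3 *
        (Real.tanh (c₀ * (x - C t)) - Real.tanh (c₀ * (x - C t)) ^ 3) := by
  have hT := tanh_shift_hasDerivAt c₀ (C t) x
  have hd := (hasDerivAt_const x (c t)).add
      (HasDerivAt.const_mul (12 * α * c₀ ^ 2)
        ((hasDerivAt_const x (1 : ℝ)).sub (hT.pow 2)))
  show deriv (fun y => solW α c₀ c C y t) x = _
  rw [show (fun y => solW α c₀ c C y t)
      = (fun y => c t + 12 * α * c₀ ^ 2 * (1 - Real.tanh (c₀ * (y - C t)) ^ 2)) from rfl]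
  erw [hd.deriv]
  push_cast
  ring

lemma solW_pxx (α c₀ : ℝ) (c C : ℝ → ℝ) (x t : ℝ) :
    px (px (solW α c₀ c C)) x t =
      -24 * α * c₀ ^ 4 *
        (1 - 4 * Real.tanh (c₀ * (x - C t)) ^ 2 + 3 * Real.tanh (c₀ * (x - C t)) ^ 4) := by
  have hfe : (fun y => px (solW α c₀ c C) y t)
      = (fun y => -24 * α * c₀ ^ 3 *
          (Real.tanh (c₀ * (y - C t)) - Real.tanh (c₀ * (y - C t)) ^ 3)) :=
    funext fun y => solW_px α c₀ c C y t
  have hT := tanh_shift_hasDerivAt c₀ (C t) x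
  have hd := HasDerivAt.const_mul (-24 * α * c₀ ^ 3) (hT.sub (hT.pow 3))
  show deriv (fun y => px (solW α c₀ c C) y t) x = _
  rw [hfe]
  erw [hd.deriv]
  push_cast
  ring

lemma solW_pxxx (α c₀ : ℝ) (c C : ℝ → ℝ) (x t : ℝ) :
    px (px (px (solW α c₀ c C))) x t =
      -24 * α * c₀ ^ 5 *
        (-8 * Real.tanh (c₀ * (x - C t)) + 20 * Real.tanh (c₀ * (x - C t)) ^ 3
          - 12 * Real.tanh (c₀ * (x - C t)) ^ 5) := by
  have hfe : (fun y => px (px (solW α c₀ c C)) y t)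
      = (fun y => -24 * α * c₀ ^ 4 *
          (1 - 4 * Real.tanh (c₀ * (y - C t)) ^ 2 + 3 * Real.tanh (c₀ * (y - C t)) ^ 4)) :=
    funext fun y => solW_pxx α c₀ c C y t
  have hT := tanh_shift_hasDerivAt c₀ (C t) x
  have hd := HasDerivAt.const_mul (-24 * α * c₀ ^ 4)
      (((hasDerivAt_const x (1 : ℝ)).sub (HasDerivAt.const_mul 4 (hT.pow 2))).add
        (HasDerivAt.const_mul 3 (hT.pow 4)))
  show deriv (fun y => px (px (solW α c₀ c C)) y t) x = _
  rw [hfe]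
  erw [hd.deriv]
  push_cast
  ring

lemma solW_pt (α c₀ : ℝ) (c C : ℝ → ℝ) (x t : ℝ)
    (hC : HasDerivAt C (c t) t) (hcd : HasDerivAt c (deriv c t) t) :
    pt (solW α c₀ c C) x t =
      deriv c t + 24 * α * c₀ ^ 3 * c t *
        (Real.tanh (c₀ * (x - C t)) - Real.tanh (c₀ * (x - C t)) ^ 3) := by
  have h1 : HasDerivAt (fun s => c₀ * (x - C s)) (c₀ * (0 - c t)) t :=
    HasDerivAt.const_mul c₀ ((hasDerivAt_const t x).sub hC)
  have hTt : HasDerivAt (fun s => Real.tanh (c₀ * (x - C s)))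
      ((1 - Real.tanh (c₀ * (x - C t)) ^ 2) * (c₀ * (0 - c t))) t :=
    by have := (tanh_hasDerivAt (c₀ * (x - C t))).comp t h1; exact this
  have hd := hcd.add (HasDerivAt.const_mul (12 * α * c₀ ^ 2)
      ((hasDerivAt_const t (1 : ℝ)).sub (hTt.pow 2)))
  show deriv (fun s => solW α c₀ c C x s) t = _
  rw [show (fun s => solW α c₀ c C x s)
      = (fun s => c s + 12 * α * c₀ ^ 2 * (1 - Real.tanh (c₀ * (x - C s)) ^ 2)) from rfl]
  erw [hd.deriv]
  push_cast
  ring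

/-- The generalized solitary (sech-squared) wave
`u = c(t) + 12α c₀² sech²(c₀(x − C(t)))` is an exact solution of the forced Ostrovsky
equation with travelling forcing `h = h₁(x − C(t)) − β c(t)(x − C(t)) + h₀(t)`, where
`h₁(ζ) = −12α c₀(8α c₀⁴ + β) tanh(c₀ζ) + 96α² c₀⁵ tanh³(c₀ζ)`. -/
theorem sech_squared_solitary_wave_solution
    (α β c₀ : ℝ) (hα : α ≠ 0) (hβ : β ≠ 0) (hc₀ : c₀ > 0)
    (c C h₀ : ℝ → ℝ)
    (hc : ContDiff ℝ (⊤ : ℕ∞) c) (hC : ∀ t : ℝ, HasDerivAt C (c t) t)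
    (hh₀ : ContDiff ℝ (⊤ : ℕ∞) h₀)
    (h₁ : ℝ → ℝ)
    (hh₁ : ∀ ζ : ℝ, h₁ ζ = -12 * α * c₀ * (8 * α * c₀ ^ 4 + β) * Real.tanh (c₀ * ζ)
      + 96 * α ^ 2 * c₀ ^ 5 * (Real.tanh (c₀ * ζ)) ^ 3)
    (h : ℝ → ℝ → ℝ)
    (hdef : ∀ x t : ℝ, h x t = h₁ (x - C t) - β * c t * (x - C t) + h₀ t) :
    SolvesForcedOstrovsky α β h
      (fun x t => c t + 12 * α * c₀ ^ 2 * (1 / Real.cosh (c₀ * (x - C t))) ^ 2) := by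
  have hfun : (fun x t => c t + 12 * α * c₀ ^ 2 * (1 / Real.cosh (c₀ * (x - C t))) ^ 2)
      = solW α c₀ c C := by
    funext x t
    unfold solW
    rw [sech_sq_eq]
  rw [hfun]
  intro x t
  have hcd : HasDerivAt c (deriv c t) t := ((hc.differentiable (by simp)) t).hasDerivAt
  have hT := tanh_shift_hasDerivAt c₀ (C t) x
  have hin : (fun y => pt (solW α c₀ c C) y t
        + solW α c₀ c C y t * px (solW α c₀ c C) y t
        + α * px (px (px (solW α c₀ c C))) y t)
      = (fun y => (deriv c t + 24 * α * c₀ ^ 3 * c t *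
            (Real.tanh (c₀ * (y - C t)) - Real.tanh (c₀ * (y - C t)) ^ 3))
          + (c t + 12 * α * c₀ ^ 2 * (1 - Real.tanh (c₀ * (y - C t)) ^ 2)) *
            (-24 * α * c₀ ^ 3 *
              (Real.tanh (c₀ * (y - C t)) - Real.tanh (c₀ * (y - C t)) ^ 3))
          + α * (-24 * α * c₀ ^ 5 *
              (-8 * Real.tanh (c₀ * (y - C t)) + 20 * Real.tanh (c₀ * (y - C t)) ^ 3
                - 12 * Real.tanh (c₀ * (y - C t)) ^ 5))) := by
    funext y
    rw [solW_pt α c₀ c C y t (hC t) hcd, solW_px, solW_pxxx]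
    simp only [solW]
  have hh : (fun y => h y t)
      = (fun y => (-12 * α * c₀ * (8 * α * c₀ ^ 4 + β) * Real.tanh (c₀ * (y - C t))
          + 96 * α ^ 2 * c₀ ^ 5 * Real.tanh (c₀ * (y - C t)) ^ 3
          - β * c t * (y - C t)) + h₀ t) := by
    funext y
    rw [hdef, hh₁]
  have hdh := HasDerivAt.add_const (h₀ t)
    (((HasDerivAt.const_mul (-12 * α * c₀ * (8 * α * c₀ ^ 4 + β)) hT).add
        (HasDerivAt.const_mul (96 * α ^ 2 * c₀ ^ 5) (hT.pow 3))).sub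
      (HasDerivAt.const_mul (β * c t) ((hasDerivAt_id' x).sub_const (C t))))
  have hd := ((hasDerivAt_const x (deriv c t)).add
        (HasDerivAt.const_mul (24 * α * c₀ ^ 3 * c t) (hT.sub (hT.pow 3)))).add
      (((hasDerivAt_const x (c t)).add
          (HasDerivAt.const_mul (12 * α * c₀ ^ 2)
            ((hasDerivAt_const x (1 : ℝ)).sub (hT.pow 2)))).mul
        (HasDerivAt.const_mul (-24 * α * c₀ ^ 3) (hT.sub (hT.pow 3))))
  have hd2 := hd.add (HasDerivAt.const_mul α
      (HasDerivAt.const_mul (-24 * α * c₀ ^ 5)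
        (((HasDerivAt.const_mul (-8) hT).add
            (HasDerivAt.const_mul 20 (hT.pow 3))).sub
          (HasDerivAt.const_mul 12 (hT.pow 5)))))
  show deriv (fun y => pt (solW α c₀ c C) y t
        + solW α c₀ c C y t * px (solW α c₀ c C) y t
        + α * px (px (px (solW α c₀ c C))) y t) x
      = β * solW α c₀ c C x t + px h x t
  rw [hin]
  erw [hd2.deriv]
  rw [show px h x t = deriv (fun y => h y t) x from rfl, hh]
  erw [hdh.deriv]
  simp only [solW]
  simp only [Pi.add_apply, Pi.sub_apply, Pi.pow_apply, Pi.mul_apply]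
  push_cast
  ring
end
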